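/- Let K ⊆ E be a regular cone with dual cone K*, and let F be a ν-normal barrier for K. The following three statements are equivalent: (1) F has negative curvature, i.e. for every x ∈ int K and every h ∈ K, the self-adjoint operator D³F(x)[h] is negative semidefinite (D³F(x)[h,u,u] ≤ 0 for all u ∈ E); (2) for every x ∈ int K and every h ∈ E, −D³F(x)[h,h] ∈ K*; (3) for every x ∈ int K and every h ∈ E with x + h ∈ int K, one has ∇²F(x)h − (∇F(x+h) − ∇F(x)) ∈ K*. -/

import Mathlib

open Set Filter Topology RealInnerProductSpace

noncomputable section

/-- The dual cone of a set `K` in a real inner product space. -/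
def dualConeSet {E : Type*} [NormedAddCommGroup E] [InnerProductSpace ℝ E] (K : Set E) :
    Set E :=
  {s : E | ∀ x ∈ K, 0 ≤ ⟪s, x⟫}

/-- A regular cone: closed, convex, pointed, with nonempty interior. -/
structure IsRegularCone {E : Type*} [NormedAddCommGroup E] [InnerProductSpace ℝ E]
    (K : Set E) : Prop where
  isClosed : IsClosed K
  convex : Convex ℝ K
  smul_mem : ∀ ⦃x : E⦄, x ∈ K → ∀ ⦃t : ℝ⦄, 0 ≤ t → t • x ∈ K
  pointed : ∀ ⦃x : E⦄, x ∈ K → -x ∈ K → x = 0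
  interior_nonempty : (interior K).Nonempty

/-- The Hessian of `f` at `x`, as a continuous linear map (the derivative of the gradient). -/
def hess {E : Type*} [NormedAddCommGroup E] [InnerProductSpace ℝ E] [CompleteSpace E]
    (f : E → ℝ) (x : E) : E →L[ℝ] E :=
  fderiv ℝ (gradient f) x

/-- A ν-normal barrier for the cone `K`: C³, convex, with positive definite Hessians on
`int K`, self-concordant, and ν-logarithmically homogeneous. -/
structure IsNormalBarrier {E : Type*} [NormedAddCommGroup E] [InnerProductSpace ℝ E]
    [CompleteSpace E] (K : Set E) (F : E → ℝ) (ν : ℝ) : Prop where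
  one_le_nu : 1 ≤ ν
  smooth : ContDiffOn ℝ 3 F (interior K)
  convexOn : ConvexOn ℝ (interior K) F
  hess_posdef : ∀ x ∈ interior K, ∀ h : E, h ≠ 0 → 0 < ⟪hess F x h, h⟫
  selfConcordant : ∀ x ∈ interior K, ∀ h : E,
    |iteratedFDeriv ℝ 3 F x ![h, h, h]| ≤ 2 * ⟪hess F x h, h⟫ ^ ((3 : ℝ) / 2)
  logHom : ∀ x ∈ interior K, ∀ τ : ℝ, 0 < τ → F (τ • x) = F x - ν * Real.log τ

/-!
For `u ∈ K` let `g_u y = DF(y)[u] = ⟪∇F(y), u⟫`. Condition (3) says that every `g_u` lies below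
its tangent planes on `int K`, and (2) that its Hessian `D²g_u(x)[h, h] = D³F(x)[h, h, u]` is
negative semidefinite there; on an open convex set both mean that `g_u` is concave. On a line, a
nonpositive second derivative gives concavity, and conversely adding the tangent inequalities at
two points shows that the derivative is antitone. By symmetry of `D³F(x)`, (1) and (2) both say
`D³F(x)[k, v, v] ≤ 0` for `k ∈ K`.
-/

theorem antitoneOn_of_le_add_mul_sub {S : Set ℝ} {φ φ' : ℝ → ℝ}
    (hφ : ∀ s ∈ S, ∀ t ∈ S, φ t ≤ φ s + φ' s * (t - s)) : AntitoneOn φ' S := by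
  intro s hs t ht hst
  have h₁ := hφ s hs t ht
  have h₂ := hφ t ht s hs
  rcases hst.eq_or_lt with rfl | hlt
  · rfl
  · nlinarith

section Line

variable {E V : Type*} [NormedAddCommGroup E] [NormedSpace ℝ E] [NormedAddCommGroup V]
  [NormedSpace ℝ V] {x h : E} {t : ℝ}

theorem hasDerivAt_comp_add_smul {g : E → V} (hg : DifferentiableAt ℝ g (x + t • h)) :
    HasDerivAt (fun s : ℝ => g (x + s • h)) (fderiv ℝ g (x + t • h) h) t := by
  have hline : HasDerivAt (fun s : ℝ => x + s • h) h t := by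
    simpa using ((hasDerivAt_id t).smul_const h).const_add x
  exact hg.hasFDerivAt.comp_hasDerivAt t hline

theorem hasDerivAt_fderiv_comp_add_smul {g : E → V}
    (hg : DifferentiableAt ℝ (fderiv ℝ g) (x + t • h)) :
    HasDerivAt (fun s : ℝ => fderiv ℝ g (x + s • h) h)
      (iteratedFDeriv ℝ 2 g (x + t • h) ![h, h]) t := by
  rw [iteratedFDeriv_two_apply]
  exact (ContinuousLinearMap.apply ℝ V h).hasFDerivAt.comp_hasDerivAt t
    (hasDerivAt_comp_add_smul hg)

end Line

section Concavity

variable {E : Type*} [NormedAddCommGroup E] [NormedSpace ℝ E] {G : E → ℝ} {D : Set E} {x h : E}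

theorem le_add_fderiv_of_iteratedFDeriv_two_nonpos (hD : IsOpen D) (hDc : Convex ℝ D)
    (hG : ContDiffOn ℝ 2 G D) (hG₂ : ∀ y ∈ D, ∀ v, iteratedFDeriv ℝ 2 G y ![v, v] ≤ 0)
    (hx : x ∈ D) (hxh : x + h ∈ D) : G (x + h) ≤ G x + fderiv ℝ G x h := by
  have hseg : ∀ t ∈ Icc (0 : ℝ) 1, x + t • h ∈ D := fun t ht => hDc.add_smul_mem hx hxh ht
  have hdiff : ∀ t ∈ Icc (0 : ℝ) 1, DifferentiableAt ℝ G (x + t • h) := fun t ht =>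
    (hG.differentiableOn (by norm_num)).differentiableAt (hD.mem_nhds (hseg t ht))
  have hdiff' : ∀ t ∈ Icc (0 : ℝ) 1, DifferentiableAt ℝ (fderiv ℝ G) (x + t • h) := fun t ht =>
    ((hG.fderiv_of_isOpen hD (m := 1) (by norm_num)).differentiableOn one_ne_zero).differentiableAt
      (hD.mem_nhds (hseg t ht))
  have hconc : ConcaveOn ℝ (Icc 0 1) fun t : ℝ => G (x + t • h) := by
    refine concaveOn_of_hasDerivWithinAt2_nonpos (convex_Icc 0 1)
      (fun t ht => (hasDerivAt_comp_add_smul (hdiff t ht)).continuousAt.continuousWithinAt)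
      (fun t ht => (hasDerivAt_comp_add_smul (hdiff t (interior_subset ht))).hasDerivWithinAt)
      (fun t ht => (hasDerivAt_fderiv_comp_add_smul
        (hdiff' t (interior_subset ht))).hasDerivWithinAt)
      (fun t ht => hG₂ _ (hseg t (interior_subset ht)) h)
  have h0 : (0 : ℝ) ∈ Icc (0 : ℝ) 1 := ⟨le_rfl, zero_le_one⟩
  have h1 : (1 : ℝ) ∈ Icc (0 : ℝ) 1 := ⟨zero_le_one, le_rfl⟩
  have hslope := hconc.slope_le_of_hasDerivAt h0 h1 zero_lt_one
    (hasDerivAt_comp_add_smul (hdiff 0 h0))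
  simpa [slope_def_field, add_comm] using hslope

theorem iteratedFDeriv_two_nonpos_of_le_add_fderiv (hD : IsOpen D) (hG : ContDiffOn ℝ 2 G D)
    (hG₁ : ∀ y ∈ D, ∀ v, y + v ∈ D → G (y + v) ≤ G y + fderiv ℝ G y v) (hx : x ∈ D) (h : E) :
    iteratedFDeriv ℝ 2 G x ![h, h] ≤ 0 := by
  set S : Set ℝ := (fun t : ℝ => x + t • h) ⁻¹' D
  have hS : S ∈ 𝓝 (0 : ℝ) :=
    (Continuous.continuousAt (by fun_prop)).preimage_mem_nhds (by simpa using hD.mem_nhds hx)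
  have hanti : AntitoneOn (fun t : ℝ => fderiv ℝ G (x + t • h) h) S := by
    refine antitoneOn_of_le_add_mul_sub (φ := fun t : ℝ => G (x + t • h)) fun s hs t ht => ?_
    have hs : x + s • h ∈ D := hs
    have ht : x + t • h ∈ D := ht
    have key := hG₁ _ hs ((t - s) • h) (by simpa [add_assoc, ← add_smul] using ht)
    simpa [add_assoc, ← add_smul, map_smul, mul_comm] using key
  have hdiff' : DifferentiableAt ℝ (fderiv ℝ G) (x + (0 : ℝ) • h) := by
    simpa using ((hG.fderiv_of_isOpen hD (m := 1) (by norm_num)).differentiableOn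
      one_ne_zero).differentiableAt (hD.mem_nhds hx)
  have hacc : AccPt (0 : ℝ) (𝓟 S) := by
    simpa using (PerfectSpace.univ_preperfect (0 : ℝ) (mem_univ _)).nhds_inter hS
  simpa using (hasDerivAt_fderiv_comp_add_smul hdiff').hasDerivWithinAt.nonpos_of_antitoneOn
    hacc hanti

end Concavity

theorem Fin.init_vec_three {α : Type*} (a b c : α) : Fin.init ![a, b, c] = ![a, b] := by
  ext i
  fin_cases i <;> rfl

section ThirdDerivative

variable {E V : Type*} [NormedAddCommGroup E] [NormedSpace ℝ E] [NormedAddCommGroup V]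
  [NormedSpace ℝ V] {f : E → V} {x : E}

theorem ContDiffAt.iteratedFDeriv_three_swap_left (hf : ContDiffAt ℝ 3 f x) (a b c : E) :
    iteratedFDeriv ℝ 3 f x ![a, b, c] = iteratedFDeriv ℝ 3 f x ![b, a, c] := by
  have hsymm : IsSymmSndFDerivAt ℝ (fderiv ℝ f) x :=
    (hf.fderiv_right (m := 2) le_rfl).isSymmSndFDerivAt (by simp)
  rw [iteratedFDeriv_succ_apply_right (n := 2), iteratedFDeriv_succ_apply_right (n := 2),
    Fin.init_vec_three, Fin.init_vec_three]
  exact congrArg (· c) hsymm.iteratedFDeriv_cons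

theorem ContDiffAt.iteratedFDeriv_three_swap_right (hf : ContDiffAt ℝ 3 f x) (a b c : E) :
    iteratedFDeriv ℝ 3 f x ![a, b, c] = iteratedFDeriv ℝ 3 f x ![a, c, b] := by
  have hsymm : (fun y => iteratedFDeriv ℝ 2 f y ![b, c]) =ᶠ[𝓝 x]
      fun y => iteratedFDeriv ℝ 2 f y ![c, b] := by
    filter_upwards [hf.eventually (by simp)] with y hy
    exact (hy.isSymmSndFDerivAt
      (by norm_num [minSmoothness_of_isRCLikeNormedField])).iteratedFDeriv_cons
  have hdiff : DifferentiableAt ℝ (iteratedFDeriv ℝ 2 f) x :=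
    (hf.iteratedFDeriv_right (m := 1) (by norm_num)).differentiableAt one_ne_zero
  change fderiv ℝ (iteratedFDeriv ℝ 2 f) x a ![b, c] = fderiv ℝ (iteratedFDeriv ℝ 2 f) x a ![c, b]
  rw [← fderiv_continuousMultilinear_apply_const_apply hdiff ![b, c],
    ← fderiv_continuousMultilinear_apply_const_apply hdiff ![c, b]]
  exact congrArg (· a) (hsymm.fderiv_eq (𝕜 := ℝ))

theorem ContDiffAt.iteratedFDeriv_three_cycle (hf : ContDiffAt ℝ 3 f x) (a b c : E) :
    iteratedFDeriv ℝ 3 f x ![a, b, c] = iteratedFDeriv ℝ 3 f x ![b, c, a] := by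
  rw [hf.iteratedFDeriv_three_swap_left, hf.iteratedFDeriv_three_swap_right]

theorem ContDiffAt.iteratedFDeriv_two_fderiv_apply (hf : ContDiffAt ℝ 3 f x) (a b u : E) :
    iteratedFDeriv ℝ 2 (fun y => fderiv ℝ f y u) x ![a, b] = iteratedFDeriv ℝ 3 f x ![a, b, u] := by
  rw [iteratedFDeriv_succ_apply_right (n := 2), Fin.init_vec_three]
  exact congrArg (· ![a, b]) ((ContinuousLinearMap.apply ℝ V u).iteratedFDeriv_comp_left
    (hf.fderiv_right (m := 2) le_rfl) le_rfl)

theorem fderiv_fderiv_apply_const (hf : DifferentiableAt ℝ (fderiv ℝ f) x) (h u : E) :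
    fderiv ℝ (fun y => fderiv ℝ f y u) x h = fderiv ℝ (fderiv ℝ f) x h u := by
  rw [fderiv_clm_apply hf (differentiableAt_const u)]
  simp

end ThirdDerivative

section InnerProduct

variable {E : Type*} [NormedAddCommGroup E] [InnerProductSpace ℝ E]

theorem sub_mem_dualConeSet_iff {K : Set E} {a b : E} :
    a - b ∈ dualConeSet K ↔ ∀ u ∈ K, ⟪b, u⟫ ≤ ⟪a, u⟫ := by
  simp [dualConeSet, inner_sub_left]

theorem inner_hess_apply [CompleteSpace E] (F : E → ℝ) (x h u : E) :
    ⟪hess F x h, u⟫ = fderiv ℝ (fderiv ℝ F) x h u := by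
  have hhess := (InnerProductSpace.toDual ℝ E).symm.toContinuousLinearEquiv.comp_fderiv
    (f := fderiv ℝ F) (x := x)
  rw [show hess F x = _ from hhess]
  simp

end InnerProduct

theorem forall_iteratedFDeriv_three_nonpos_iff {E : Type*} [NormedAddCommGroup E]
    [NormedSpace ℝ E] {F : E → ℝ} {D : Set E} (hD : IsOpen D) (hDc : Convex ℝ D)
    (hF : ContDiffOn ℝ 3 F D) (u : E) :
    (∀ x ∈ D, ∀ h, iteratedFDeriv ℝ 3 F x ![h, h, u] ≤ 0) ↔
      ∀ x ∈ D, ∀ h, x + h ∈ D →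
        fderiv ℝ F (x + h) u ≤ fderiv ℝ F x u + fderiv ℝ (fderiv ℝ F) x h u := by
  have hF₃ : ∀ x ∈ D, ContDiffAt ℝ 3 F x := fun x hx => hF.contDiffAt (hD.mem_nhds hx)
  have hG : ContDiffOn ℝ 2 (fun y => fderiv ℝ F y u) D :=
    (hF.fderiv_of_isOpen hD (m := 2) le_rfl).clm_apply contDiffOn_const
  have hG₁ : ∀ x ∈ D, ∀ h,
      fderiv ℝ (fun y => fderiv ℝ F y u) x h = fderiv ℝ (fderiv ℝ F) x h u := fun x hx h =>
    fderiv_fderiv_apply_const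
      (((hF₃ x hx).fderiv_right (m := 2) le_rfl).differentiableAt two_ne_zero) h u
  have hG₂ : ∀ x ∈ D, ∀ h, iteratedFDeriv ℝ 2 (fun y => fderiv ℝ F y u) x ![h, h] =
      iteratedFDeriv ℝ 3 F x ![h, h, u] := fun x hx h =>
    (hF₃ x hx).iteratedFDeriv_two_fderiv_apply h h u
  constructor
  · intro H x hx h hxh
    rw [← hG₁ x hx h]
    exact le_add_fderiv_of_iteratedFDeriv_two_nonpos hD hDc hG
      (fun y hy v => (hG₂ y hy v).trans_le (H y hy v)) hx hxh
  · intro H x hx h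
    rw [← hG₂ x hx h]
    exact iteratedFDeriv_two_nonpos_of_le_add_fderiv hD hG
      (fun y hy v hyv => (hG₁ y hy v).symm ▸ H y hy v hyv) hx h

/-- Theorem `th-NC`: three equivalent characterizations of negative
curvature of a normal barrier. -/
theorem negative_curvature_characterizations {E : Type*} [NormedAddCommGroup E]
    [InnerProductSpace ℝ E] [FiniteDimensional ℝ E]
    (K : Set E) (hK : IsRegularCone K) (F : E → ℝ) (ν : ℝ)
    (hF : IsNormalBarrier K F ν) :
    ((∀ x ∈ interior K, ∀ h ∈ K, ∀ u : E, iteratedFDeriv ℝ 3 F x ![h, u, u] ≤ 0) ↔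
      (∀ x ∈ interior K, ∀ h : E, ∀ u ∈ K, iteratedFDeriv ℝ 3 F x ![h, h, u] ≤ 0)) ∧
    ((∀ x ∈ interior K, ∀ h : E, ∀ u ∈ K, iteratedFDeriv ℝ 3 F x ![h, h, u] ≤ 0) ↔
      (∀ x ∈ interior K, ∀ h : E, x + h ∈ interior K →
        hess F x h - (gradient F (x + h) - gradient F x) ∈ dualConeSet K)) := by
  have hF₃ : ∀ x ∈ interior K, ContDiffAt ℝ 3 F x := fun x hx =>
    hF.smooth.contDiffAt (isOpen_interior.mem_nhds hx)
  have hconcave := forall_iteratedFDeriv_three_nonpos_iff isOpen_interior hK.convex.interior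
    hF.smooth
  refine ⟨⟨fun H x hx h u hu => ?_, fun H x hx h hh u => ?_⟩, ?_⟩
  · rw [← (hF₃ x hx).iteratedFDeriv_three_cycle]
    exact H x hx u hu h
  · rw [(hF₃ x hx).iteratedFDeriv_three_cycle]
    exact H x hx u h hh
  simp only [sub_mem_dualConeSet_iff, inner_sub_left, inner_gradient_left, inner_hess_apply,
    sub_le_iff_le_add']
  exact ⟨fun H x hx h hxh u hu => (hconcave u).1 (fun x hx h => H x hx h u hu) x hx h hxh,
    fun H x hx h u hu => (hconcave u).2 (fun x hx h hxh => H x hx h hxh u hu) x hx h⟩
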